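/- Gallai's theorem: In any edge coloring of a complete graph on at least two vertices that contains no rainbow triangle, there exists a partition of the vertex set into at least two nonempty parts such that at most two colors in total appear on edges between distinct parts, and for each pair of distinct parts, all edges between those two parts receive the same single color. -/

import Mathlib

open SimpleGraph

/-- The edge coloring `c` of the complete graph on `V` contains a rainbow triangle. -/
def HasRainbowTriangle {V α : Type*} (c : Sym2 V → α) : Prop :=
  ∃ x y z : V, x ≠ y ∧ x ≠ z ∧ y ≠ z ∧
    c s(x, y) ≠ c s(x, z) ∧ c s(x, y) ≠ c s(y, z) ∧ c s(x, z) ≠ c s(y, z)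

/-- The edge coloring `c` contains a copy of `H` all of whose edges have color `i`. -/
def HasMonoCopyIn {V W α : Type*} (c : Sym2 V → α) (H : SimpleGraph W) (i : α) : Prop :=
  ∃ f : W ↪ V, ∀ u v, H.Adj u v → c s(f u, f v) = i

/-- The edge coloring `c` contains a monochromatic copy of `H`. -/
def HasMonoCopy {V W α : Type*} (c : Sym2 V → α) (H : SimpleGraph W) : Prop :=
  ∃ i, HasMonoCopyIn c H i

/-- Every `k`-coloring of the edges of `K_n` contains a rainbow triangle or a
monochromatic copy of `H`. -/
def grProp {W : Type*} (k : ℕ) (H : SimpleGraph W) (n : ℕ) : Prop :=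
  ∀ c : Sym2 (Fin n) → Fin k, HasRainbowTriangle c ∨ HasMonoCopy c H

/-- The `k`-color Gallai–Ramsey number `gr_k(K₃ : H)`: the minimum `N` such that for all
`n ≥ N`, every `k`-coloring of the edges of `K_n` contains a rainbow triangle or a
monochromatic copy of `H`. -/
noncomputable def gr {W : Type*} (k : ℕ) (H : SimpleGraph W) : ℕ :=
  sInf {N | ∀ n, N ≤ n → grProp k H n}

/-!
Write `H(i, j)` for the graph of edges whose color is neither `i` nor `j`. In a triangle with
one edge in `H(i, j)` and two edges outside it, the absence of rainbow triangles forces the two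
outer edges to have the same color. Hence, if `H(i, j)` is disconnected, its components form the
required partition: edges between two components all have one color, which is `i` or `j`.

That some `H(i, j)` is disconnected is proved by adding one vertex `v` at a time to a set `W`
on which `H(i, j)` is already disconnected. Either some component of `H(i, j)` on `W` is joined
to `v` only by edges of colors `i` and `j`, and it stays a component; or, by looking at the
triangles through `v`, the edges from `v` into `W` carry at most two colors, `k ∉ {i, j}` and
`ρ ∈ {i, j}`, and then `v` together with its `k`-neighbours is separated from the rest by the
colors `ρ` and `k` (or `v` alone is, if it sees a single color).
-/

open Finset

namespace Finpartition

variable {V : Type*} [Fintype V] [DecidableEq V] {r : Setoid V} [DecidableRel r.r]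
  {p q : Finset V} {a b : V}

theorem rel_of_mem_ofSetoid (hp : p ∈ (ofSetoid r).parts) (ha : a ∈ p) (hb : b ∈ p) :
    r a b := by
  rw [← (ofSetoid r).part_eq_of_mem hp ha] at hb
  exact mem_part_ofSetoid_iff_rel.1 hb

theorem not_rel_of_mem_ofSetoid (hp : p ∈ (ofSetoid r).parts) (hq : q ∈ (ofSetoid r).parts)
    (hpq : p ≠ q) (ha : a ∈ p) (hb : b ∈ q) : ¬ r a b := fun h => by
  refine hpq ((ofSetoid r).eq_of_mem_parts hp hq ?_ hb)
  rw [← (ofSetoid r).part_eq_of_mem hp ha]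
  exact mem_part_ofSetoid_iff_rel.2 h

theorem two_le_card_parts_ofSetoid (h : ¬ r a b) : 2 ≤ #(ofSetoid r).parts := by
  refine one_lt_card.2 ⟨_, (ofSetoid r).part_mem.2 (mem_univ a), _,
    (ofSetoid r).part_mem.2 (mem_univ b), fun e => h ?_⟩
  exact mem_part_ofSetoid_iff_rel.1 (e ▸ (ofSetoid r).mem_part (mem_univ b))

end Finpartition

section

variable {V α : Type*} {c : Sym2 V → α}

section Triangle

variable {x y z : V}

theorem color_eq_of_ne_of_ne (hnr : ¬ HasRainbowTriangle c) (hxy : x ≠ y) (hxz : x ≠ z)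
    (hyz : y ≠ z) (hx : c s(x, y) ≠ c s(x, z)) (hy : c s(x, y) ≠ c s(y, z)) :
    c s(x, z) = c s(y, z) := by
  by_contra h
  exact hnr ⟨x, y, z, hxy, hxz, hyz, hx, hy, h⟩

theorem color_eq_or_eq_of_ne (hnr : ¬ HasRainbowTriangle c) (hxy : x ≠ y) (hxz : x ≠ z)
    (hyz : y ≠ z) (h : c s(x, y) ≠ c s(x, z)) :
    c s(y, z) = c s(x, y) ∨ c s(y, z) = c s(x, z) := by
  by_contra! h'
  exact hnr ⟨x, y, z, hxy, hxz, hyz, h, h'.1.symm, h'.2.symm⟩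

end Triangle

theorem SimpleGraph.not_reachable_of_not_adj {G : SimpleGraph V} {x y : V} (S : Set V)
    (hx : x ∈ S) (hy : y ∉ S) (h : ∀ u ∈ S, ∀ w ∉ S, ¬ G.Adj u w) :
    ¬ G.Reachable x y := by
  rintro ⟨p⟩
  obtain ⟨d, -, hd, hd'⟩ := p.exists_boundary_dart S hx hy
  exact h _ hd _ hd' d.adj

-- Vertices outside `s` are isolated, so that the induction can shrink `s` inside the fixed type.
def avoidGraph (c : Sym2 V → α) (s : Set V) (C : Set α) : SimpleGraph V where
  Adj u w := u ∈ s ∧ w ∈ s ∧ u ≠ w ∧ c s(u, w) ∉ C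
  symm := ⟨fun u w ⟨hu, hw, hne, hC⟩ => ⟨hw, hu, hne.symm, by rwa [Sym2.eq_swap]⟩⟩
  loopless := ⟨fun _ h => h.2.2.1 rfl⟩

namespace avoidGraph

variable {s : Set V} {C : Set α} {u u' w w' x y : V}

theorem color_mem_of_not_reachable (hu : u ∈ s) (hw : w ∈ s)
    (h : ¬ (avoidGraph c s C).Reachable u w) : c s(u, w) ∈ C := by
  by_contra hC
  exact h (Adj.reachable ⟨hu, hw, fun e => h (e ▸ .rfl), hC⟩)

theorem not_reachable_of_color_mem (S : Set V) (hx : x ∈ S) (hy : y ∉ S)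
    (h : ∀ u ∈ s, ∀ w ∈ s, u ∈ S → w ∉ S → c s(u, w) ∈ C) :
    ¬ (avoidGraph c s C).Reachable x y :=
  not_reachable_of_not_adj S hx hy fun u huS w hwS ⟨hu, hw, _, hC⟩ => hC (h u hu w hw huS hwS)

theorem color_eq_of_adj_of_not_reachable (hnr : ¬ HasRainbowTriangle c)
    (hadj : (avoidGraph c s C).Adj u u') (hw : w ∈ s)
    (h : ¬ (avoidGraph c s C).Reachable u w) : c s(u, w) = c s(u', w) := by
  have h' : ¬ (avoidGraph c s C).Reachable u' w := fun h' => h (hadj.reachable.trans h')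
  have huw := color_mem_of_not_reachable hadj.1 hw h
  have hu'w := color_mem_of_not_reachable hadj.2.1 hw h'
  exact color_eq_of_ne_of_ne hnr hadj.2.2.1 (fun e => h (e ▸ .rfl)) (fun e => h' (e ▸ .rfl))
    (ne_of_mem_of_not_mem huw hadj.2.2.2).symm (ne_of_mem_of_not_mem hu'w hadj.2.2.2).symm

theorem color_eq_of_reachable_of_not_reachable (hnr : ¬ HasRainbowTriangle c)
    (hu : (avoidGraph c s C).Reachable u u') (hw : w ∈ s)
    (h : ¬ (avoidGraph c s C).Reachable u w) : c s(u, w) = c s(u', w) := by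
  obtain ⟨p⟩ := hu
  induction p with
  | nil => rfl
  | cons hadj _ ih =>
    exact (color_eq_of_adj_of_not_reachable hnr hadj hw h).trans
      (ih fun h' => h (hadj.reachable.trans h'))

theorem color_eq_of_reachable_of_reachable (hnr : ¬ HasRainbowTriangle c)
    (hu : (avoidGraph c s C).Reachable u u') (hw : (avoidGraph c s C).Reachable w w')
    (hu' : u' ∈ s) (hws : w ∈ s) (h : ¬ (avoidGraph c s C).Reachable u w) :
    c s(u, w) = c s(u', w') := by
  have h' : ¬ (avoidGraph c s C).Reachable w u' := fun h' => h (hu.trans h'.symm).symm.symm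
  rw [color_eq_of_reachable_of_not_reachable hnr hu hws h, Sym2.eq_swap,
    color_eq_of_reachable_of_not_reachable hnr hw hu' h', Sym2.eq_swap]

variable {W : Set V} {v : V}

theorem not_reachable_insert_of_forall_reachable_mem (hv : v ∉ W) (hx : x ∈ W)
    (h : ∀ u ∈ W, (avoidGraph c W C).Reachable x u → c s(v, u) ∈ C) :
    ¬ (avoidGraph c (insert v W) C).Reachable v x := by
  refine fun hvx => not_reachable_of_color_mem {u | u ∈ W ∧ (avoidGraph c W C).Reachable x u}
    ⟨hx, .rfl⟩ (fun h' => hv h'.1) ?_ hvx.symm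
  rintro u - w (rfl | hw) ⟨hu, hxu⟩ hwS
  · rw [Sym2.eq_swap]
    exact h u hu hxu
  · by_contra hC
    have hne : u ≠ w := fun e => hwS (e ▸ ⟨hu, hxu⟩)
    exact hwS ⟨hw, hxu.trans (Adj.reachable ⟨hu, hw, hne, hC⟩)⟩

theorem not_reachable_insert_of_forall_eq (hv : v ∉ W) (hx : x ∈ W)
    (h : ∀ w ∈ W, c s(v, w) = c s(v, x)) :
    ¬ (avoidGraph c (insert v W) {c s(v, x), c s(v, x)}).Reachable v x := by
  refine not_reachable_of_color_mem {v} rfl (fun e => hv (e ▸ hx)) ?_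
  rintro _ - w (rfl | hw) rfl hwv
  · exact absurd rfl hwv
  · exact Or.inl (h w hw)

theorem not_reachable_insert_of_forall_eq_or_eq (hnr : ¬ HasRainbowTriangle c) (hv : v ∉ W)
    (hy : y ∈ W) (hxy : c s(v, x) ≠ c s(v, y))
    (h : ∀ w ∈ W, c s(v, w) = c s(v, x) ∨ c s(v, w) = c s(v, y)) :
    ¬ (avoidGraph c (insert v W) {c s(v, x), c s(v, y)}).Reachable v y := by
  refine not_reachable_of_color_mem (insert v {u | u ∈ W ∧ c s(v, u) = c s(v, x)}) (.inl rfl)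
    ?_ ?_
  · rintro (e | ⟨-, e⟩)
    · exact hv (e ▸ hy)
    · exact hxy e.symm
  rintro u - w (rfl | hw) huS hwS
  · exact absurd (.inl rfl) hwS
  have hvw : c s(v, w) = c s(v, y) := (h w hw).resolve_left fun e => hwS (.inr ⟨hw, e⟩)
  rcases huS with rfl | ⟨huW, hvu⟩
  · exact .inr hvw
  have hvu' : v ≠ u := fun e => hv (e ▸ huW)
  have hvw' : v ≠ w := fun e => hv (e ▸ hw)
  have huw : u ≠ w := fun e => hwS (.inr (e ▸ ⟨huW, hvu⟩))
  have hne : c s(v, u) ≠ c s(v, w) := by rwa [hvu, hvw]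
  rcases color_eq_or_eq_of_ne hnr hvu' hvw' huw hne with e | e
  · exact .inl (e.trans hvu)
  · exact .inr (e.trans hvw)

theorem exists_not_reachable_insert_of_forall_eq_or_eq_or_eq (hnr : ¬ HasRainbowTriangle c)
    (hv : v ∉ W) (hx : x ∈ W)
    (h : ∀ u ∈ W, ∀ w ∈ W, ∀ z ∈ W,
      c s(v, u) = c s(v, w) ∨ c s(v, u) = c s(v, z) ∨ c s(v, w) = c s(v, z)) :
    ∃ i j, ∃ y ∈ W, ¬ (avoidGraph c (insert v W) {i, j}).Reachable v y := by
  by_cases hall : ∀ w ∈ W, c s(v, w) = c s(v, x)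
  · exact ⟨_, _, x, hx, not_reachable_insert_of_forall_eq hv hx hall⟩
  push Not at hall
  obtain ⟨y, hy, hxy⟩ := hall
  refine ⟨_, _, y, hy,
    not_reachable_insert_of_forall_eq_or_eq hnr hv hy hxy.symm fun w hw => ?_⟩
  rcases h x hx y hy w hw with e | e | e
  · exact absurd e.symm hxy
  · exact .inl e.symm
  · exact .inr e.symm

theorem color_eq_of_not_mem_of_mem (hnr : ¬ HasRainbowTriangle c) (hv : v ∉ W) (hu : u ∈ W)
    (hw : w ∈ W) (hvu : c s(v, u) ∉ C) (hvw : c s(v, w) ∈ C)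
    (huw : ¬ (avoidGraph c W C).Reachable u w) : c s(v, w) = c s(u, w) :=
  color_eq_of_ne_of_ne hnr (fun e => hv (e ▸ hu)) (fun e => hv (e ▸ hw))
    (fun e => huw (e ▸ .rfl)) (ne_of_mem_of_not_mem hvw hvu).symm
    (ne_of_mem_of_not_mem (color_mem_of_not_reachable hu hw huw) hvu).symm

theorem color_eq_of_not_mem_of_not_reachable (hnr : ¬ HasRainbowTriangle c) (hv : v ∉ W)
    (hu : u ∈ W) (hw : w ∈ W) (hvu : c s(v, u) ∉ C) (hvw : c s(v, w) ∉ C)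
    (huw : ¬ (avoidGraph c W C).Reachable u w) : c s(v, u) = c s(v, w) := by
  rw [Sym2.eq_swap, Sym2.eq_swap (a := v)]
  rw [Sym2.eq_swap] at hvu hvw
  exact color_eq_of_ne_of_ne hnr (fun e => huw (e ▸ .rfl)) (fun e => hv (e ▸ hu))
    (fun e => hv (e ▸ hw)) (ne_of_mem_of_not_mem (color_mem_of_not_reachable hu hw huw) hvu)
    (ne_of_mem_of_not_mem (color_mem_of_not_reachable hu hw huw) hvw)

theorem exists_not_mem_not_reachable
    (hcomp : ∀ z ∈ W, ∃ u ∈ W, (avoidGraph c W C).Reachable z u ∧ c s(v, u) ∉ C)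
    (hx : x ∈ W) (hy : y ∈ W) (hxy : ¬ (avoidGraph c W C).Reachable x y) (w : V) :
    ∃ u ∈ W, c s(v, u) ∉ C ∧ ¬ (avoidGraph c W C).Reachable u w := by
  obtain ⟨a, ha, hxa, hva⟩ := hcomp x hx
  obtain ⟨b, hb, hyb, hvb⟩ := hcomp y hy
  by_cases haw : (avoidGraph c W C).Reachable a w
  · exact ⟨b, hb, hvb, fun hbw => hxy (hxa.trans (haw.trans (hbw.symm.trans hyb.symm)))⟩
  · exact ⟨a, ha, hva, haw⟩

theorem color_eq_of_not_mem (hnr : ¬ HasRainbowTriangle c) (hv : v ∉ W)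
    (hcomp : ∀ z ∈ W, ∃ u ∈ W, (avoidGraph c W C).Reachable z u ∧ c s(v, u) ∉ C)
    (hx : x ∈ W) (hy : y ∈ W) (hxy : ¬ (avoidGraph c W C).Reachable x y)
    (hu : u ∈ W) (hw : w ∈ W) (hvu : c s(v, u) ∉ C) (hvw : c s(v, w) ∉ C) :
    c s(v, u) = c s(v, w) := by
  by_cases huw : (avoidGraph c W C).Reachable u w
  · obtain ⟨z, hz, hvz, hzu⟩ := exists_not_mem_not_reachable hcomp hx hy hxy u
    have hzw : ¬ (avoidGraph c W C).Reachable z w := fun h => hzu (h.trans huw.symm)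
    exact (color_eq_of_not_mem_of_not_reachable hnr hv hz hu hvz hvu hzu).symm.trans
      (color_eq_of_not_mem_of_not_reachable hnr hv hz hw hvz hvw hzw)
  · exact color_eq_of_not_mem_of_not_reachable hnr hv hu hw hvu hvw huw

theorem color_eq_of_mem (hnr : ¬ HasRainbowTriangle c) (hv : v ∉ W)
    (hcomp : ∀ z ∈ W, ∃ u ∈ W, (avoidGraph c W C).Reachable z u ∧ c s(v, u) ∉ C)
    (hx : x ∈ W) (hy : y ∈ W) (hxy : ¬ (avoidGraph c W C).Reachable x y)
    (hu : u ∈ W) (hw : w ∈ W) (hvu : c s(v, u) ∈ C) (hvw : c s(v, w) ∈ C) :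
    c s(v, u) = c s(v, w) := by
  by_cases huw : (avoidGraph c W C).Reachable u w
  · obtain ⟨z, hz, hvz, hzu⟩ := exists_not_mem_not_reachable hcomp hx hy hxy u
    have hzw : ¬ (avoidGraph c W C).Reachable z w := fun h => hzu (h.trans huw.symm)
    have huz : ¬ (avoidGraph c W C).Reachable u z := fun h => hzu h.symm
    calc c s(v, u) = c s(z, u) := color_eq_of_not_mem_of_mem hnr hv hz hu hvz hvu hzu
      _ = c s(z, w) := by
        rw [Sym2.eq_swap, color_eq_of_reachable_of_not_reachable hnr huw hz huz, Sym2.eq_swap]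
      _ = c s(v, w) := (color_eq_of_not_mem_of_mem hnr hv hz hw hvz hvw hzw).symm
  · obtain ⟨u', hu', huu', hvu'⟩ := hcomp u hu
    obtain ⟨w', hw', hww', hvw'⟩ := hcomp w hw
    have hw'u : ¬ (avoidGraph c W C).Reachable w' u := fun h => huw (hww'.trans h).symm
    have hu'w : ¬ (avoidGraph c W C).Reachable u' w := fun h => huw (huu'.trans h)
    calc c s(v, u) = c s(w', u) := color_eq_of_not_mem_of_mem hnr hv hw' hu hvw' hvu hw'u
      _ = c s(w, u') := color_eq_of_reachable_of_reachable hnr hww'.symm huu' hw hu hw'u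
      _ = c s(v, w) := by
        rw [Sym2.eq_swap, color_eq_of_not_mem_of_mem hnr hv hu' hw hvu' hvw hu'w]

theorem exists_not_reachable_insert (hnr : ¬ HasRainbowTriangle c) (hv : v ∉ W) {i j : α}
    (hx : x ∈ W) (hy : y ∈ W) (hxy : ¬ (avoidGraph c W {i, j}).Reachable x y) :
    ∃ i j, ∃ y ∈ W, ¬ (avoidGraph c (insert v W) {i, j}).Reachable v y := by
  by_cases hcomp : ∀ z ∈ W, ∃ u ∈ W,
      (avoidGraph c W {i, j}).Reachable z u ∧ c s(v, u) ∉ ({i, j} : Set α)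
  · have key : ∀ u ∈ W, ∀ w ∈ W,
        (c s(v, u) ∈ ({i, j} : Set α) ↔ c s(v, w) ∈ ({i, j} : Set α)) →
        c s(v, u) = c s(v, w) := fun u hu w hw h => by
      by_cases hvu : c s(v, u) ∈ ({i, j} : Set α)
      · exact color_eq_of_mem hnr hv hcomp hx hy hxy hu hw hvu (h.1 hvu)
      · exact color_eq_of_not_mem hnr hv hcomp hx hy hxy hu hw hvu (mt h.2 hvu)
    refine exists_not_reachable_insert_of_forall_eq_or_eq_or_eq hnr hv hx
      fun u hu w hw z hz => ?_
    have pigeonhole : ∀ p q r : Prop, (p ↔ q) ∨ (p ↔ r) ∨ (q ↔ r) := by tauto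
    rcases pigeonhole (c s(v, u) ∈ ({i, j} : Set α)) (c s(v, w) ∈ ({i, j} : Set α))
      (c s(v, z) ∈ ({i, j} : Set α)) with h | h | h
    · exact .inl (key u hu w hw h)
    · exact .inr (.inl (key u hu z hz h))
    · exact .inr (.inr (key w hw z hz h))
  · push Not at hcomp
    obtain ⟨z, hz, hzC⟩ := hcomp
    exact ⟨i, j, z, hz, not_reachable_insert_of_forall_reachable_mem hv hz hzC⟩

theorem exists_not_reachable_of_two_le_card (hnr : ¬ HasRainbowTriangle c) (s : Finset V)
    (hs : 2 ≤ #s) :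
    ∃ i j, ∃ x ∈ s, ∃ y ∈ s, ¬ (avoidGraph c s {i, j}).Reachable x y := by
  classical
  induction s using Finset.induction_on with
  | empty => simp at hs
  | insert v W hv ih =>
    have hv' : v ∉ (W : Set V) := hv
    obtain ⟨i, j, y, hy, hvy⟩ :
        ∃ i j, ∃ y ∈ (W : Set V), ¬ (avoidGraph c (insert v ↑W) {i, j}).Reachable v y := by
      by_cases hW : 2 ≤ #W
      · obtain ⟨i, j, x, hx, y, hy, hxy⟩ := ih hW
        exact exists_not_reachable_insert hnr hv' hx hy hxy
      · rw [card_insert_of_notMem hv] at hs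
        obtain ⟨w, rfl⟩ := card_eq_one.1 (show #W = 1 by omega)
        refine exists_not_reachable_insert_of_forall_eq_or_eq_or_eq hnr hv'
          (mem_coe.2 (mem_singleton_self w)) ?_
        simp only [coe_singleton, Set.mem_singleton_iff]
        rintro _ rfl _ rfl _ rfl
        exact .inl rfl
    exact ⟨i, j, v, mem_insert_self v W, y, mem_insert_of_mem hy, by rwa [coe_insert]⟩

end avoidGraph

end

theorem gallai_partition {V α : Type*} [Fintype V] [DecidableEq V]
    (hcard : 2 ≤ Fintype.card V) (c : Sym2 V → α) (hnr : ¬ HasRainbowTriangle c) :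
    ∃ P : Finpartition (Finset.univ : Finset V),
      2 ≤ P.parts.card ∧
      (∃ c₁ c₂ : α, ∀ p ∈ P.parts, ∀ q ∈ P.parts, p ≠ q →
        ∀ u ∈ p, ∀ v ∈ q, c s(u, v) = c₁ ∨ c s(u, v) = c₂) ∧
      (∀ p ∈ P.parts, ∀ q ∈ P.parts, p ≠ q →
        ∃ i : α, ∀ u ∈ p, ∀ v ∈ q, c s(u, v) = i) := by
  obtain ⟨i, j, x, -, y, -, hxy⟩ := avoidGraph.exists_not_reachable_of_two_le_card hnr univ hcard
  rw [coe_univ] at hxy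
  classical
  let G := avoidGraph c Set.univ {i, j}
  let P := Finpartition.ofSetoid G.reachableSetoid
  have hsep {p q} (hp : p ∈ P.parts) (hq : q ∈ P.parts) (hpq : p ≠ q) {u w} (hu : u ∈ p)
      (hw : w ∈ q) : ¬ G.Reachable u w :=
    Finpartition.not_rel_of_mem_ofSetoid hp hq hpq hu hw
  refine ⟨P, Finpartition.two_le_card_parts_ofSetoid hxy, ⟨i, j, ?_⟩, ?_⟩
  · intro p hp q hq hpq u hu w hw
    exact avoidGraph.color_mem_of_not_reachable (Set.mem_univ u) (Set.mem_univ w)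
      (hsep hp hq hpq hu hw)
  · intro p hp q hq hpq
    obtain ⟨u₀, hu₀⟩ := P.nonempty_of_mem_parts hp
    obtain ⟨w₀, hw₀⟩ := P.nonempty_of_mem_parts hq
    refine ⟨c s(u₀, w₀), fun u hu w hw => ?_⟩
    exact avoidGraph.color_eq_of_reachable_of_reachable hnr
      (Finpartition.rel_of_mem_ofSetoid hp hu hu₀) (Finpartition.rel_of_mem_ofSetoid hq hw hw₀)
      (Set.mem_univ u₀) (Set.mem_univ w) (hsep hp hq hpq hu hw)
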